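/- Let G be a tree with maximum degree at most three and at least 3 nodes. Then there exists an edge e of G such that deleting e yields two component trees G₀ and G₁ with |G₀| ∈ {2, 3}. -/

import Mathlib

/-!
Take a longest path `a x y ⋯ b`. If a neighbour `w ≠ y` of `x` had a neighbour `u ≠ x`, then
acyclicity would make `u w x y ⋯ b` a path, longer than the longest one. So all neighbours of `x`
other than `y` are leaves, and deleting `xy` cuts off the star on `x` and these leaves, which has
`deg x ∈ {2, 3}` vertices.
-/

namespace SimpleGraph

variable {V : Type*} {G : SimpleGraph V}

lemma IsAcyclic.isPath_cons (hG : G.IsAcyclic) {u v w : V} {p : G.Walk u v} (hp : p.IsPath)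
    (h : G.Adj w u) (hw : w ≠ p.snd) : (Walk.cons h p).IsPath :=
  hp.cons fun hmem => hw (hG.eq_snd_of_adj_start hp h.symm hmem)

lemma Walk.IsPath.exists_longest [Finite V] {u v : V} {p : G.Walk u v} (hp : p.IsPath) :
    ∃ (a b : V) (q : G.Walk a b), q.IsPath ∧ p.length ≤ q.length ∧
      ∀ (c d : V) (r : G.Walk c d), r.IsPath → r.length ≤ q.length := by
  classical
  have := Fintype.ofFinite V
  let IsPathLength (n : ℕ) : Prop := ∃ (a b : V) (q : G.Walk a b), q.IsPath ∧ q.length = n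
  have hbound : p.length ≤ Fintype.card V := hp.length_lt.le
  obtain ⟨a, b, q, hq, hlen⟩ : IsPathLength (Nat.findGreatest IsPathLength (Fintype.card V)) :=
    Nat.findGreatest_spec hbound ⟨u, v, p, hp, rfl⟩
  refine ⟨a, b, q, hq, hlen ▸ Nat.le_findGreatest hbound ⟨u, v, p, hp, rfl⟩, ?_⟩
  exact fun c d r hr => hlen ▸ Nat.le_findGreatest hr.length_lt.le ⟨c, d, r, hr, rfl⟩

lemma IsAcyclic.neighborSet_subset_of_forall_isPath_length_le (hG : G.IsAcyclic) {x b w : V}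
    {q : G.Walk x b} (hq : q.IsPath)
    (hmax : ∀ (c d : V) (r : G.Walk c d), r.IsPath → r.length ≤ q.length + 1)
    (hxw : G.Adj x w) (hw : w ≠ q.snd) : G.neighborSet w ⊆ {x} := by
  intro u hwu
  by_contra hux
  have hpath := hG.isPath_cons (hG.isPath_cons hq hxw.symm hw) (G.adj_symm hwu)
    (by simpa using hux)
  have := hmax _ _ _ hpath
  simp at this

lemma IsAcyclic.exists_adj_neighborSet_subset [Finite V] (hG : G.IsAcyclic) {a v c : V}
    (hav : G.Adj a v) (hvc : G.Adj v c) (hac : a ≠ c) :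
    ∃ x y, G.Adj x y ∧ (∃ a, G.Adj x a ∧ a ≠ y) ∧
      ∀ w, G.Adj x w → w ≠ y → G.neighborSet w ⊆ {x} := by
  have hp : (Walk.cons hav (Walk.cons hvc .nil)).IsPath :=
    hG.isPath_cons (Walk.IsPath.nil.cons (by simpa using hvc.ne)) hav (by simpa using hac)
  obtain ⟨a₀, b, p, hp, hlen, hmax⟩ := hp.exists_longest
  cases p with
  | nil => simp at hlen
  | @cons _ x _ hax q =>
    have hq : q.IsPath := hp.of_cons
    have hq_not_nil : ¬ q.Nil := by
      rw [← Walk.length_eq_zero_iff]; simp only [Walk.length_cons, Walk.length_nil] at hlen; omega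
    refine ⟨x, q.snd, q.adj_snd hq_not_nil, ⟨a₀, hax.symm, ?_⟩, fun w hxw hw => ?_⟩
    · rintro rfl
      exact ((Walk.cons_isPath_iff _ _).mp hp).2 (q.getVert_mem_support 1)
    · exact hG.neighborSet_subset_of_forall_isPath_length_le hq (by simpa using hmax) hxw hw

lemma Reachable.mem_of_forall_adj_mem {s : Set V} (hs : ∀ v ∈ s, ∀ w, G.Adj v w → w ∈ s)
    {u v : V} (h : G.Reachable u v) (hu : u ∈ s) : v ∈ s := by
  obtain ⟨p⟩ := h
  induction p with
  | nil => exact hu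
  | cons hadj _ ih => exact ih (hs _ hu _ hadj)

lemma Preconnected.reachable_deleteEdges_or (hG : G.Preconnected) (x y v : V) :
    (G.deleteEdges {s(x, y)}).Reachable v x ∨ (G.deleteEdges {s(x, y)}).Reachable v y := by
  refine (hG x v).mem_of_forall_adj_mem (s := {v | (G.deleteEdges {s(x, y)}).Reachable v x ∨
    (G.deleteEdges {s(x, y)}).Reachable v y}) ?_ (.inl .rfl)
  intro v hv w hvw
  by_cases he : s(v, w) = s(x, y)
  · rcases Sym2.eq_iff.mp he with ⟨-, rfl⟩ | ⟨-, rfl⟩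
    exacts [.inr .rfl, .inl .rfl]
  · have hwv : (G.deleteEdges {s(x, y)}).Adj w v := by simp [hvw.symm, Sym2.eq_swap, he]
    exact hv.imp hwv.reachable.trans hwv.reachable.trans

lemma supp_connectedComponentMk_deleteEdges_eq {x y : V}
    (hleaf : ∀ w, G.Adj x w → w ≠ y → G.neighborSet w ⊆ {x}) :
    ((G.deleteEdges {s(x, y)}).connectedComponentMk x).supp = insert x (G.neighborSet x \ {y}) := by
  ext v
  rw [ConnectedComponent.mem_supp_iff, ConnectedComponent.eq]
  constructor
  · refine fun h => h.symm.mem_of_forall_adj_mem ?_ (Set.mem_insert x _)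
    rintro v (rfl | ⟨hxv, hvy⟩) w hvw
    · rw [deleteEdges_adj] at hvw
      exact .inr ⟨hvw.1, fun hwy => hvw.2 (by simp_all)⟩
    · exact .inl (hleaf v hxv hvy (G.deleteEdges_le _ hvw))
  · rintro (rfl | ⟨hxv, hvy⟩)
    · exact .rfl
    · refine Adj.reachable (deleteEdges_adj.mpr ⟨hxv.symm, ?_⟩)
      have hvx : v ≠ x := (show G.Adj x v from hxv).ne'
      simp_all

lemma IsTree.exists_two_le_degree [Fintype V] [DecidableRel G.Adj] (hG : G.IsTree)
    (hcard : 3 ≤ Fintype.card V) : ∃ v, 2 ≤ G.degree v := by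
  classical
  have hsum : ∑ v, G.degree v + 2 = 2 * Fintype.card V := by
    rw [sum_degrees_eq_twice_card_edges, ← hG.card_edgeFinset]; ring
  obtain ⟨v, -, hv⟩ : ∃ v ∈ Finset.univ, 1 < G.degree v :=
    Finset.exists_lt_of_sum_lt (by simp; omega)
  exact ⟨v, hv⟩

end SimpleGraph

open SimpleGraph

/-- **Lemma (QuadPentGraph).** Let `G` be a tree with maximum degree at most three and at
least 3 nodes. Then there is an edge `e = s(x,y)` such that deleting `e` yields two component
trees, one of which (the component of `x`) has 2 or 3 nodes. -/
theorem tree_maxdeg_three_delete_edge_small_component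
    {V : Type*} [Fintype V] (G : SimpleGraph V) [DecidableRel G.Adj]
    (hT : G.IsTree) (hdeg : ∀ v : V, G.degree v ≤ 3) (hcard : 3 ≤ Fintype.card V) :
    ∃ x y : V, G.Adj x y ∧
      (let G' := G.deleteEdges {s(x, y)}
      (G'.connectedComponentMk x ≠ G'.connectedComponentMk y) ∧
      (∀ v : V, G'.connectedComponentMk v = G'.connectedComponentMk x ∨
        G'.connectedComponentMk v = G'.connectedComponentMk y) ∧
      ((G'.connectedComponentMk x).supp.ncard = 2 ∨
        (G'.connectedComponentMk x).supp.ncard = 3)) := by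
  obtain ⟨v, hv⟩ := hT.exists_two_le_degree hcard
  obtain ⟨u, hvu, w, hvw, huw⟩ := Finset.one_lt_card.mp hv
  obtain ⟨x, y, hxy, ⟨a, hxa, hay⟩, hleaf⟩ :=
    hT.isAcyclic.exists_adj_neighborSet_subset (G.adj_symm ((G.mem_neighborFinset _ _).mp hvu))
      ((G.mem_neighborFinset _ _).mp hvw) huw
  have hsupp := supp_connectedComponentMk_deleteEdges_eq hleaf
  have hncard : ((G.deleteEdges {s(x, y)}).connectedComponentMk x).supp.ncard = G.degree x := by
    rw [hsupp, Set.ncard_exchange G.notMem_neighborSet_self hxy, Set.ncard_eq_toFinset_card',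
      Set.toFinset_card, card_neighborSet_eq_degree]
  have hdeg_x : 2 ≤ G.degree x := Finset.one_lt_card.mpr
    ⟨a, (G.mem_neighborFinset _ _).mpr hxa, y, (G.mem_neighborFinset _ _).mpr hxy, hay⟩
  refine ⟨x, y, hxy, fun h => ?_, fun z => ?_, by grind [hdeg x]⟩
  · have hy : y ∈ ((G.deleteEdges {s(x, y)}).connectedComponentMk x).supp := h ▸ rfl
    simp [hsupp, hxy.ne'] at hy
  · simp only [ConnectedComponent.eq]
    exact hT.connected.preconnected.reachable_deleteEdges_or x y z
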